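/- arXiv:1906.05046 — 5 statements merged into one kernel-verified Lean document; each statement's English description precedes it below -/
import Mathlib

section
/- Suppose f ∈ L¹(𝕋²) and k = (k₁,k₂) ∈ ℤ² \ {0} with k₂ ≠ 0, and v ∈ ℤ² \ {0} satisfies v ⊥ k (i.e. v·k = 0). Then the Fourier coefficient f̂(k) equals ∫₀¹ I_v f(0,y) e^{-2πi k₂ y} dy. -/
open MeasureTheory

/-- The X-ray transform on the flat torus in the integer direction `v`. -/
noncomputable def torusXray (v : ℤ × ℤ) (f : ℝ × ℝ → ℂ) (p : ℝ × ℝ) : ℂ :=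
  ∫ t in (0:ℝ)..1, f (p.1 + t * v.1, p.2 + t * v.2)

/-- The Fourier coefficient `f̂(k) = ∫_{𝕋²} f(x,y) e^{-2πi(k₁x + k₂y)} dx dy`. -/
noncomputable def fourierCoef (f : ℝ × ℝ → ℂ) (k : ℤ × ℤ) : ℂ :=
  ∫ x in (0:ℝ)..1, ∫ y in (0:ℝ)..1,
    f (x, y) * Complex.exp (-2 * (Real.pi : ℂ) * Complex.I *
      ((k.1 : ℂ) * (x : ℂ) + (k.2 : ℂ) * (y : ℂ)))

section XrayAuxSection

open MeasureTheory Set Function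
open scoped ENNReal NNReal

namespace Xray

def Sq : Set (ℝ × ℝ) := Set.Icc (0:ℝ) 1 ×ˢ Set.Icc (0:ℝ) 1

lemma mem_Sq_shift (p : ℝ × ℝ) : p + ((((-⌊p.1⌋ : ℤ)) : ℝ), (((-⌊p.2⌋ : ℤ)) : ℝ)) ∈ Sq := by
  constructor
  · constructor
    · show (0:ℝ) ≤ p.1 + _
      push_cast
      linarith [Int.floor_le p.1]
    · show p.1 + _ ≤ (1:ℝ)
      push_cast
      linarith [Int.lt_floor_add_one p.1]
  · constructor
    · show (0:ℝ) ≤ p.2 + _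
      push_cast
      linarith [Int.floor_le p.2]
    · show p.2 + _ ≤ (1:ℝ)
      push_cast
      linarith [Int.lt_floor_add_one p.2]

lemma tau_pre (m : ℤ × ℤ) (g : ℝ × ℝ → ℂ)
    (hgper : ∀ p : ℝ × ℝ, ∀ m : ℤ × ℤ, g (p.1 + m.1, p.2 + m.2) = g p) :
    g ∘ (fun p : ℝ × ℝ => p + ((m.1 : ℝ), (m.2 : ℝ))) = g := by
  funext p
  exact hgper p m

lemma measurableSet_Sq : MeasurableSet Sq := measurableSet_Icc.prod measurableSet_Icc

lemma aesm_global (g : ℝ × ℝ → ℂ)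
    (hgper : ∀ p : ℝ × ℝ, ∀ m : ℤ × ℤ, g (p.1 + m.1, p.2 + m.2) = g p)
    (hm : AEStronglyMeasurable g (volume.restrict Sq)) :
    AEStronglyMeasurable g (volume : Measure (ℝ × ℝ)) := by
  have hcover : (⋃ m : ℤ × ℤ,
      ((fun p : ℝ × ℝ => p + ((m.1 : ℝ), (m.2 : ℝ))) ⁻¹' Sq)) = univ := by
    ext p
    simp only [mem_iUnion, mem_preimage, mem_univ, iff_true]
    exact ⟨(-⌊p.1⌋, -⌊p.2⌋), mem_Sq_shift p⟩
  have key : ∀ m : ℤ × ℤ, AEStronglyMeasurable g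
      (volume.restrict ((fun p : ℝ × ℝ => p + ((m.1 : ℝ), (m.2 : ℝ))) ⁻¹' Sq)) := by
    intro m
    have hmp : MeasurePreserving (fun p : ℝ × ℝ => p + ((m.1 : ℝ), (m.2 : ℝ)))
        volume volume := measurePreserving_add_right volume _
    have := hm.comp_quasiMeasurePreserving
      (hmp.restrict_preimage measurableSet_Sq).quasiMeasurePreserving
    rwa [tau_pre m g hgper] at this
  have := aestronglyMeasurable_iUnion_iff.mpr key
  rwa [hcover, Measure.restrict_univ] at this

lemma integrableOn_translate (g : ℝ × ℝ → ℂ)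
    (hgper : ∀ p : ℝ × ℝ, ∀ m : ℤ × ℤ, g (p.1 + m.1, p.2 + m.2) = g p)
    (hgint : IntegrableOn g Sq) (m : ℤ × ℤ) :
    IntegrableOn g ((fun p : ℝ × ℝ => p + ((m.1 : ℝ), (m.2 : ℝ))) ⁻¹' Sq) := by
  have hmp : MeasurePreserving (fun p : ℝ × ℝ => p + ((m.1 : ℝ), (m.2 : ℝ)))
      volume volume := measurePreserving_add_right volume _
  have hemb : MeasurableEmbedding (fun p : ℝ × ℝ => p + ((m.1 : ℝ), (m.2 : ℝ))) :=
    (MeasurableEquiv.addRight ((m.1 : ℝ), (m.2 : ℝ))).measurableEmbedding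
  have := (hmp.integrableOn_comp_preimage hemb (f := g) (s := Sq)).mpr hgint
  rwa [tau_pre m g hgper] at this

lemma integrableOn_rect (g : ℝ × ℝ → ℂ)
    (hgper : ∀ p : ℝ × ℝ, ∀ m : ℤ × ℤ, g (p.1 + m.1, p.2 + m.2) = g p)
    (hgint : IntegrableOn g Sq) (M : ℤ) :
    IntegrableOn g (Set.Icc (-(M:ℝ)) M ×ˢ Set.Icc (-(M:ℝ)) M) := by
  have hcov : Set.Icc (-(M:ℝ)) M ×ˢ Set.Icc (-(M:ℝ)) M ⊆
      ⋃ m ∈ (Finset.Icc (-M) M ×ˢ Finset.Icc (-M) M : Finset (ℤ × ℤ)),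
        ((fun p : ℝ × ℝ => p + ((m.1 : ℝ), (m.2 : ℝ))) ⁻¹' Sq) := by
    intro p hp
    obtain ⟨⟨h11, h12⟩, h21, h22⟩ := hp
    simp only [mem_iUnion, mem_preimage, Finset.mem_product, Finset.mem_Icc]
    refine ⟨(-⌊p.1⌋, -⌊p.2⌋), ⟨⟨?_, ?_⟩, ?_, ?_⟩, mem_Sq_shift p⟩
    · have : ⌊p.1⌋ ≤ M := by simpa using Int.floor_le_floor h12
      omega
    · have : (-M : ℤ) ≤ ⌊p.1⌋ := Int.le_floor.mpr (by push_cast; linarith)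
      omega
    · have : ⌊p.2⌋ ≤ M := by simpa using Int.floor_le_floor h22
      omega
    · have : (-M : ℤ) ≤ ⌊p.2⌋ := Int.le_floor.mpr (by push_cast; linarith)
      omega
  refine IntegrableOn.mono_set ?_ hcov
  rw [integrableOn_finset_iUnion]
  intro m _
  exact integrableOn_translate g hgper hgint m

lemma smul_prod_vol (c : ℝ≥0∞) (hc : c ≠ ⊤) :
    ((c • (volume : Measure ℝ)).prod (volume : Measure ℝ)) = c • ((volume : Measure ℝ).prod volume) := by
  have : SigmaFinite (c • (volume : Measure ℝ)) := by
    lift c to ℝ≥0 using hc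
    rw [← ENNReal.smul_def]
    infer_instance
  refine Measure.prod_eq fun s t hs ht => ?_
  simp [Measure.prod_prod, mul_assoc]

lemma map_T_volume (a b : ℝ) (ha : a ≠ 0) :
    Measure.map (fun q : ℝ × ℝ => (a * q.1, q.2 + b * q.1)) (volume : Measure (ℝ × ℝ))
      = ENNReal.ofReal |a⁻¹| • volume := by
  have hshear : MeasurePreserving (fun q : ℝ × ℝ => (q.1, q.2 + b * q.1))
      ((volume : Measure ℝ).prod volume) ((volume : Measure ℝ).prod volume) := by
    refine MeasurePreserving.skew_product (g := fun a c => c + b * a)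
      (μc := (volume : Measure ℝ)) (μd := (volume : Measure ℝ))
      (MeasurePreserving.id (volume : Measure ℝ)) ?_ ?_
    · exact measurable_snd.add (measurable_fst.const_mul b)
    · exact Filter.Eventually.of_forall fun x =>
        (measurePreserving_add_right volume (b * x)).map_eq
  have hscale : Measure.map (Prod.map (fun x : ℝ => a * x) (id : ℝ → ℝ))
      ((volume : Measure ℝ).prod volume)
      = ENNReal.ofReal |a⁻¹| • ((volume : Measure ℝ).prod volume) := by
    rw [← Measure.map_prod_map _ _ (measurable_const_mul a) measurable_id,
      Real.map_volume_mul_left ha, Measure.map_id,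
      smul_prod_vol _ ENNReal.ofReal_ne_top]
  have hcomp : (fun q : ℝ × ℝ => (a * q.1, q.2 + b * q.1)) =
      (Prod.map (fun x : ℝ => a * x) (id : ℝ → ℝ)) ∘ (fun q : ℝ × ℝ => (q.1, q.2 + b * q.1)) := by
    funext q; rfl
  rw [Measure.volume_eq_prod ℝ ℝ, hcomp, ← Measure.map_map
    (Measurable.prodMap (measurable_const_mul a) measurable_id)
    (measurable_fst.prodMk (measurable_snd.add (measurable_fst.const_mul b)) :
      Measurable (fun q : ℝ × ℝ => (q.1, q.2 + b * q.1))),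
    hshear.map_eq, hscale]

lemma integrableOn_comp_T (g : ℝ × ℝ → ℂ) (a b : ℝ) (ha : a ≠ 0)
    (hm : AEStronglyMeasurable g (volume : Measure (ℝ × ℝ)))
    (hRint : IntegrableOn g (Set.Icc (-(|a| + |b| + 1)) (|a| + |b| + 1) ×ˢ
        Set.Icc (-(|a| + |b| + 1)) (|a| + |b| + 1))) :
    IntegrableOn (fun q : ℝ × ℝ => g (a * q.1, q.2 + b * q.1)) Sq := by
  have hmapT := map_T_volume a b ha
  set T : ℝ × ℝ → ℝ × ℝ := fun q => (a * q.1, q.2 + b * q.1) with hT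
  have hTcont : Continuous T := by
    apply Continuous.prodMk
    · exact (continuous_fst.const_smul a).congr (fun q => by simp [smul_eq_mul])
    · exact continuous_snd.add (continuous_fst.const_smul b |>.congr (fun q => by simp [smul_eq_mul]))
  have hTmeas : Measurable T := hTcont.measurable
  have hTinj : Function.Injective T := by
    intro p q h
    have h1 : a * p.1 = a * q.1 := congrArg Prod.fst h
    have h1' : p.1 = q.1 := mul_left_cancel₀ ha h1
    have h2 : p.2 + b * p.1 = q.2 + b * q.1 := congrArg Prod.snd h
    have h2' : p.2 = q.2 := by rw [h1'] at h2; linarith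
    exact Prod.ext h1' h2'
  have himg_meas : MeasurableSet (T '' Sq) :=
    (((isCompact_Icc.prod isCompact_Icc).image hTcont)).measurableSet
  have hsub : T '' Sq ⊆ Set.Icc (-(|a| + |b| + 1)) (|a| + |b| + 1) ×ˢ
      Set.Icc (-(|a| + |b| + 1)) (|a| + |b| + 1) := by
    rintro z ⟨q, ⟨⟨hq1a, hq1b⟩, hq2a, hq2b⟩, rfl⟩
    have h1 := le_abs_self a
    have h2 := neg_abs_le a
    have h3 := le_abs_self b
    have h4 := neg_abs_le b
    constructor
    · constructor
      · show -(|a| + |b| + 1) ≤ a * q.1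
        nlinarith [abs_nonneg b]
      · show a * q.1 ≤ |a| + |b| + 1
        nlinarith [abs_nonneg b]
    · constructor
      · show -(|a| + |b| + 1) ≤ q.2 + b * q.1
        nlinarith [abs_nonneg a]
      · show q.2 + b * q.1 ≤ |a| + |b| + 1
        nlinarith [abs_nonneg a]
  have hmap_restrict : Measure.map T (volume.restrict Sq)
      = ENNReal.ofReal |a⁻¹| • (volume.restrict (T '' Sq)) := by
    have := Measure.restrict_map hTmeas (μ := (volume : Measure (ℝ × ℝ))) himg_meas
    rw [Set.preimage_image_eq Sq hTinj] at this
    rw [← this, hmapT, Measure.restrict_smul]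
  have hac : Measure.map T (volume.restrict Sq) ≪ (volume : Measure (ℝ × ℝ)) := by
    rw [hmap_restrict]
    exact ((Measure.absolutelyContinuous_of_le Measure.restrict_le_self).smul_left _)
  have hg_map : AEStronglyMeasurable g (Measure.map T (volume.restrict Sq)) := hm.mono_ac hac
  have hg_int_map : Integrable g (Measure.map T (volume.restrict Sq)) := by
    rw [hmap_restrict]
    exact ((hRint.mono_set hsub).smul_measure ENNReal.ofReal_ne_top)
  exact (integrable_map_measure hg_map hTmeas.aemeasurable).mp hg_int_map

lemma per_intervalIntegrable (h : ℝ → ℂ) (hper : Function.Periodic h 1)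
    (h01 : IntegrableOn h (Set.Ioc (0:ℝ) 1)) (t₁ t₂ : ℝ) :
    IntervalIntegrable h volume t₁ t₂ := by
  rw [intervalIntegrable_iff]
  have htrans : ∀ n : ℤ, IntegrableOn h ((fun x : ℝ => x + (n:ℝ)) ⁻¹' (Set.Ioc 0 1)) := by
    intro n
    have hmp : MeasurePreserving (fun x : ℝ => x + (n:ℝ)) volume volume :=
      measurePreserving_add_right volume _
    have hemb := (MeasurableEquiv.addRight ((n:ℝ))).measurableEmbedding
    have hint := (hmp.integrableOn_comp_preimage hemb (f := h) (s := Set.Ioc 0 1)).mpr h01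
    have heq : h ∘ (fun x : ℝ => x + (n:ℝ)) = h := by
      funext x
      have := (hper.zsmul n) x
      simpa using this
    rwa [heq] at hint
  set u := min t₁ t₂
  set v := max t₁ t₂
  have hcov : Set.uIoc t₁ t₂ ⊆ ⋃ n ∈ Finset.Icc (1 - ⌈v⌉) (1 - ⌈u⌉),
      ((fun x : ℝ => x + (n:ℝ)) ⁻¹' (Set.Ioc 0 1)) := by
    intro x hx
    obtain ⟨hx1, hx2⟩ := hx
    simp only [mem_iUnion, mem_preimage, Finset.mem_Icc]
    refine ⟨1 - ⌈x⌉, ⟨?_, ?_⟩, ?_, ?_⟩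
    · have : ⌈x⌉ ≤ ⌈v⌉ := Int.ceil_le_ceil hx2
      omega
    · have : ⌈u⌉ ≤ ⌈x⌉ := Int.ceil_le_ceil hx1.le
      omega
    · push_cast
      linarith [Int.ceil_lt_add_one x]
    · push_cast
      linarith [Int.le_ceil x]
  refine IntegrableOn.mono_set ?_ hcov
  rw [integrableOn_finset_iUnion]
  exact fun n _ => htrans n

end Xray

end XrayAuxSection

/-- Inversion formula: for `f ∈ L¹(𝕋²)`, `k ∈ ℤ² \ {0}` with `k₂ ≠ 0`, and
`v ∈ ℤ² \ {0}` with `v ⊥ k`, one has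
`f̂(k) = ∫₀¹ I_v f(0,y) e^{-2πi k₂ y} dy`. -/
theorem fourierCoef_eq_xray_integral
    (f : ℝ × ℝ → ℂ)
    (hper : ∀ p : ℝ × ℝ, ∀ m : ℤ × ℤ, f (p.1 + m.1, p.2 + m.2) = f p)
    (hint : IntegrableOn f (Set.Icc (0:ℝ) 1 ×ˢ Set.Icc (0:ℝ) 1))
    (k : ℤ × ℤ) (hk : k ≠ 0) (hk2 : k.2 ≠ 0)
    (v : ℤ × ℤ) (hv : v ≠ 0) (hperp : v.1 * k.1 + v.2 * k.2 = 0) :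
    fourierCoef f k =
      ∫ y in (0:ℝ)..1, torusXray v f (0, y) *
        Complex.exp (-2 * (Real.pi : ℂ) * Complex.I * (k.2 : ℂ) * (y : ℂ)) := by
  classical
  have hv1 : v.1 ≠ 0 := by
    intro h1
    apply hv
    have h2 : v.2 * k.2 = 0 := by rw [h1] at hperp; simpa using hperp
    have h3 : v.2 = 0 := by
      rcases mul_eq_zero.mp h2 with h | h
      · exact h
      · exact absurd h hk2
    exact Prod.ext h1 h3
  have hv1R : ((v.1 : ℝ)) ≠ 0 := Int.cast_ne_zero.mpr hv1
  have hv1C : ((v.1 : ℂ)) ≠ 0 := Int.cast_ne_zero.mpr hv1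
  set c : ℂ := -2 * (Real.pi : ℂ) * Complex.I with hc
  set g : ℝ × ℝ → ℂ :=
    fun p => f p * Complex.exp (c * ((k.1 : ℂ) * p.1 + (k.2 : ℂ) * p.2)) with hgdef
  have hZc : (k.1 : ℂ) * (v.1 : ℂ) + (k.2 : ℂ) * (v.2 : ℂ) = 0 := by
    have h0 : ((v.1 * k.1 + v.2 * k.2 : ℤ) : ℂ) = 0 := by rw [hperp]; simp
    push_cast at h0
    linear_combination h0
  have hgper : ∀ p : ℝ × ℝ, ∀ m : ℤ × ℤ, g (p.1 + m.1, p.2 + m.2) = g p := by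
    intro p m
    simp only [hgdef]
    rw [hper p m]
    congr 1
    have harg : c * ((k.1 : ℂ) * ((p.1 + (m.1 : ℝ) : ℝ) : ℂ) + (k.2 : ℂ) * ((p.2 + (m.2 : ℝ) : ℝ) : ℂ))
        = c * ((k.1 : ℂ) * (p.1 : ℂ) + (k.2 : ℂ) * (p.2 : ℂ))
          + ((-(k.1 * m.1 + k.2 * m.2) : ℤ) : ℂ) * (2 * (Real.pi : ℂ) * Complex.I) := by
      push_cast
      rw [hc]
      ring
    rw [harg, Complex.exp_add, Complex.exp_int_mul_two_pi_mul_I, mul_one]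
  have hnorm : ∀ p : ℝ × ℝ, ‖Complex.exp (c * ((k.1 : ℂ) * p.1 + (k.2 : ℂ) * p.2))‖ = 1 := by
    intro p
    have harg : c * ((k.1 : ℂ) * p.1 + (k.2 : ℂ) * p.2)
        = ((-2 * Real.pi * ((k.1 : ℝ) * p.1 + (k.2 : ℝ) * p.2) : ℝ) : ℂ) * Complex.I := by
      rw [hc]; push_cast; ring
    rw [harg]
    exact Complex.norm_exp_ofReal_mul_I _
  have hmeasExp : Continuous fun p : ℝ × ℝ =>
      Complex.exp (c * ((k.1 : ℂ) * p.1 + (k.2 : ℂ) * p.2)) := by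
    fun_prop
  have hgint : IntegrableOn g Xray.Sq := by
    have h1 := hint.bdd_mul hmeasExp.aestronglyMeasurable (Filter.Eventually.of_forall fun p => le_of_eq (hnorm p))
    have h2 : (fun p : ℝ × ℝ => Complex.exp (c * ((k.1 : ℂ) * p.1 + (k.2 : ℂ) * p.2)) * f p) = g := by
      funext p
      simp only [hgdef]
      exact mul_comm _ _
    rw [h2] at h1
    exact h1
  have haesm : AEStronglyMeasurable g (volume : Measure (ℝ × ℝ)) :=
    Xray.aesm_global g hgper hgint.aestronglyMeasurable
  have hrect := Xray.integrableOn_rect g hgper hgint (|v.1| + |v.2| + 1)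
  have hMcast : ((|v.1| + |v.2| + 1 : ℤ) : ℝ) = |(v.1 : ℝ)| + |(v.2 : ℝ)| + 1 := by
    push_cast
    ring
  rw [hMcast] at hrect
  have hcompT : IntegrableOn (fun q : ℝ × ℝ => g ((v.1 : ℝ) * q.1, q.2 + (v.2 : ℝ) * q.1)) Xray.Sq :=
    Xray.integrableOn_comp_T g (v.1 : ℝ) (v.2 : ℝ) hv1R haesm hrect
  set h : ℝ → ℂ := fun x => ∫ y in (0:ℝ)..1, g (x, y) with hhdef
  have hIocSq : IntegrableOn g (Set.Ioc (0:ℝ) 1 ×ˢ Set.Ioc (0:ℝ) 1) :=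
    hgint.mono_set (Set.prod_mono Set.Ioc_subset_Icc_self Set.Ioc_subset_Icc_self)
  have hprodInt : Integrable g
      ((volume.restrict (Set.Ioc (0:ℝ) 1)).prod (volume.restrict (Set.Ioc (0:ℝ) 1))) := by
    rw [Measure.prod_restrict, ← Measure.volume_eq_prod ℝ ℝ]
    exact hIocSq
  have hh01 : IntegrableOn h (Set.Ioc (0:ℝ) 1) := by
    have h1 := hprodInt.integral_prod_left
    have hfun : (fun x => ∫ y, g (x, y) ∂(volume.restrict (Set.Ioc (0:ℝ) 1))) = h := by
      funext x
      simp only [hhdef]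
      rw [intervalIntegral.integral_of_le zero_le_one]
    rwa [hfun] at h1
  have hhper : Function.Periodic h 1 := by
    intro x
    simp only [hhdef]
    refine intervalIntegral.integral_congr fun y _ => ?_
    have := hgper (x, y) (1, 0)
    simpa using this
  have hhall : ∀ t₁ t₂ : ℝ, IntervalIntegrable h volume t₁ t₂ :=
    fun t₁ t₂ => Xray.per_intervalIntegrable h hhper hh01 t₁ t₂
  have keyR1 : ∀ y : ℝ, torusXray v f (0, y) * Complex.exp (c * (k.2 : ℂ) * (y : ℂ))
      = ∫ t in (0:ℝ)..1, g ((v.1 : ℝ) * t, y + (v.2 : ℝ) * t) := by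
    intro y
    simp only [torusXray]
    rw [← intervalIntegral.integral_mul_const]
    refine intervalIntegral.integral_congr fun t _ => ?_
    rw [show ((0:ℝ), y).1 + t * (v.1 : ℝ) = (v.1 : ℝ) * t by simp [mul_comm],
      show ((0:ℝ), y).2 + t * (v.2 : ℝ) = y + (v.2 : ℝ) * t by simp [mul_comm]]
    simp only [hgdef]
    congr 1
    apply congrArg
    push_cast
    linear_combination (-(c * (t : ℂ))) * hZc
  have keyR3 : ∀ t : ℝ, (∫ y in (0:ℝ)..1, g ((v.1 : ℝ) * t, y + (v.2 : ℝ) * t)) = h ((v.1 : ℝ) * t) := by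
    intro t
    have hpy : Function.Periodic (fun y => g ((v.1 : ℝ) * t, y)) 1 := by
      intro y
      have := hgper ((v.1 : ℝ) * t, y) (0, 1)
      simpa using this
    have hshift := intervalIntegral.integral_comp_add_right (a := 0) (b := 1)
      (fun y => g ((v.1 : ℝ) * t, y)) ((v.2 : ℝ) * t)
    rw [hshift]
    rw [show (0:ℝ) + (v.2 : ℝ) * t = (v.2 : ℝ) * t by ring,
      show (1:ℝ) + (v.2 : ℝ) * t = (v.2 : ℝ) * t + 1 by ring]
    rw [hpy.intervalIntegral_add_eq ((v.2 : ℝ) * t) 0]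
    simp only [hhdef, zero_add]
  have hswap : (∫ y in (0:ℝ)..1, ∫ t in (0:ℝ)..1, g ((v.1 : ℝ) * t, y + (v.2 : ℝ) * t))
      = ∫ t in (0:ℝ)..1, ∫ y in (0:ℝ)..1, g ((v.1 : ℝ) * t, y + (v.2 : ℝ) * t) := by
    have h1 : Integrable (fun q : ℝ × ℝ => g ((v.1 : ℝ) * q.1, q.2 + (v.2 : ℝ) * q.1))
        ((volume.restrict (Set.Ioc (0:ℝ) 1)).prod (volume.restrict (Set.Ioc (0:ℝ) 1))) := by
      rw [Measure.prod_restrict, ← Measure.volume_eq_prod ℝ ℝ]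
      exact hcompT.mono_set (Set.prod_mono Set.Ioc_subset_Icc_self Set.Ioc_subset_Icc_self)
    have h2 := h1.swap
    have hInt : Integrable (Function.uncurry fun y t => g ((v.1 : ℝ) * t, y + (v.2 : ℝ) * t))
        ((volume.restrict (Set.Ioc (0:ℝ) 1)).prod (volume.restrict (Set.Ioc (0:ℝ) 1))) := h2
    simp_rw [intervalIntegral.integral_of_le zero_le_one]
    exact MeasureTheory.integral_integral_swap hInt
  have hint_scale : (∫ t in (0:ℝ)..1, h ((v.1 : ℝ) * t))
      = ((v.1 : ℝ))⁻¹ • ∫ x in (0:ℝ)..(v.1 : ℝ), h x := by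
    have h1 := intervalIntegral.integral_comp_mul_left (a := 0) (b := 1) h hv1R
    simpa using h1
  have hper_n : (∫ x in (0:ℝ)..(v.1 : ℝ), h x) = ((v.1 : ℂ)) * ∫ x in (0:ℝ)..1, h x := by
    have h1 := hhper.intervalIntegral_add_zsmul_eq v.1 0 hhall
    simp only [zero_add, zsmul_eq_mul, mul_one] at h1
    exact h1
  have hLHS : fourierCoef f k = ∫ x in (0:ℝ)..1, h x := by
    simp only [fourierCoef]
    rfl
  calc fourierCoef f k
      = ∫ x in (0:ℝ)..1, h x := hLHS
    _ = ((v.1 : ℝ))⁻¹ • ((v.1 : ℂ) * ∫ x in (0:ℝ)..1, h x) := by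
        rw [Complex.real_smul]
        push_cast
        rw [← mul_assoc, inv_mul_cancel₀ hv1C, one_mul]
    _ = ((v.1 : ℝ))⁻¹ • ∫ x in (0:ℝ)..(v.1 : ℝ), h x := by rw [hper_n]
    _ = ∫ t in (0:ℝ)..1, h ((v.1 : ℝ) * t) := hint_scale.symm
    _ = ∫ t in (0:ℝ)..1, ∫ y in (0:ℝ)..1, g ((v.1 : ℝ) * t, y + (v.2 : ℝ) * t) :=
        intervalIntegral.integral_congr fun t _ => (keyR3 t).symm
    _ = ∫ y in (0:ℝ)..1, ∫ t in (0:ℝ)..1, g ((v.1 : ℝ) * t, y + (v.2 : ℝ) * t) := hswap.symm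
    _ = ∫ y in (0:ℝ)..1, torusXray v f (0, y) * Complex.exp (c * (k.2 : ℂ) * (y : ℂ)) :=
        intervalIntegral.integral_congr fun yy _ => (keyR1 yy).symm
end

section
/- The X-ray transform I : H^s(𝕋²) → H^s(𝕋² × Q) is an isometry for every s ∈ ℝ: ‖I f‖_{H^s(𝕋² × Q)} = ‖f‖_{H^s(𝕋²)}. -/
open scoped ENNReal

/-- The Sobolev weight `⟨k⟩^{2s} = (1 + |k|²)^s` for `k ∈ ℤ²`. -/
noncomputable def sobWt (s : ℝ) (k : ℤ × ℤ) : ℝ :=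
  (1 + (k.1 : ℝ)^2 + (k.2 : ℝ)^2) ^ s

/-- Fourier coefficients of the X-ray transform: `Î f(k,v) = f̂(k)` if `k·v = 0`,
and `0` otherwise. -/
noncomputable def xrayCoef (f : ℤ × ℤ → ℂ) (k v : ℤ × ℤ) : ℂ :=
  if k.1 * v.1 + k.2 * v.2 = 0 then f k else 0

/-- For each nonzero frequency `k`, there is exactly one direction `v ∈ Q`
orthogonal to `k`. -/
lemma exists_unique_orth (Q : Set (ℤ × ℤ)) (hQ0 : (0, 0) ∉ Q)
    (hQ : ∀ v : ℤ × ℤ, v ≠ 0 → ∃! w : ℤ × ℤ, w ∈ Q ∧ ∃ c : ℤ, v = c • w)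
    (k : ℤ × ℤ) (hk : k ≠ 0) :
    ∃! v : ℤ × ℤ, v ∈ Q ∧ k.1 * v.1 + k.2 * v.2 = 0 := by
  have hk' : k.1 ≠ 0 ∨ k.2 ≠ 0 := by
    by_contra h
    push_neg at h
    exact hk (Prod.ext h.1 h.2)
  set v0 : ℤ × ℤ := (-k.2, k.1) with hv0def
  have hv0 : v0 ≠ 0 := by
    intro h
    have h1 : v0.1 = 0 := by rw [h]; rfl
    have h2 : v0.2 = 0 := by rw [h]; rfl
    simp only [hv0def, neg_eq_zero] at h1 h2
    exact hk (Prod.ext h2 h1)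
  obtain ⟨w, ⟨hwQ, c, hc⟩, _⟩ := hQ v0 hv0
  have hc1 : -k.2 = c * w.1 := congrArg Prod.fst hc
  have hc2 : k.1 = c * w.2 := congrArg Prod.snd hc
  have hcne : c ≠ 0 := by
    intro h
    subst h
    simp only [zero_mul] at hc1 hc2
    rcases hk' with h | h
    · exact h hc2
    · exact h (by linarith)
  have horth : k.1 * w.1 + k.2 * w.2 = 0 := by
    have : c * (k.1 * w.1 + k.2 * w.2) = 0 := by
      linear_combination (-k.1) * hc1 + (-k.2) * hc2
    rcases mul_eq_zero.mp this with h | h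
    · exact absurd h hcne
    · exact h
  refine ⟨w, ⟨hwQ, horth⟩, ?_⟩
  rintro w' ⟨hw'Q, horth'⟩
  -- w' ≠ 0 and w ≠ 0
  have hwne : w ≠ 0 := by rintro rfl; exact hQ0 hwQ
  have hw'ne : w' ≠ 0 := by rintro rfl; exact hQ0 hw'Q
  -- determinant is zero
  have hdet : w.1 * w'.2 = w.2 * w'.1 := by
    rcases hk' with h | h
    · have : k.1 * (w.1 * w'.2 - w.2 * w'.1) = 0 := by
        linear_combination w'.2 * horth - w.2 * horth'
      rcases mul_eq_zero.mp this with h1 | h1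
      · exact absurd h1 h
      · linarith
    · have : k.2 * (w.1 * w'.2 - w.2 * w'.1) = 0 := by
        linear_combination w.1 * horth' - w'.1 * horth
      rcases mul_eq_zero.mp this with h1 | h1
      · exact absurd h1 h
      · linarith
  by_cases hw1 : w.1 = 0
  · -- then w'.1 = 0 too, use second coordinates
    have hw2 : w.2 ≠ 0 := by
      intro h; exact hwne (Prod.ext hw1 h)
    have hw'1 : w'.1 = 0 := by
      have : w.2 * w'.1 = 0 := by rw [← hdet, hw1, zero_mul]
      rcases mul_eq_zero.mp this with h | h
      · exact absurd h hw2
      · exact h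
    have hw'2 : w'.2 ≠ 0 := by
      intro h; exact hw'ne (Prod.ext hw'1 h)
    set u : ℤ × ℤ := (0, w'.2 * w.2) with hudef
    have hune : u ≠ 0 := by
      intro h
      have : u.2 = 0 := by rw [h]; rfl
      simp only [hudef] at this
      rcases mul_eq_zero.mp this with h1 | h1
      · exact hw'2 h1
      · exact hw2 h1
    have h1 : u = w'.2 • w := by
      simp only [hudef, Prod.smul_mk, smul_eq_mul]
      exact Prod.ext (by simp [hw1]) rfl
    have h2 : u = w.2 • w' := by
      simp only [hudef]
      exact Prod.ext (by simp [hw'1]) (by simp [mul_comm])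
    exact ((hQ u hune).unique ⟨hw'Q, w.2, h2⟩ ⟨hwQ, w'.2, h1⟩)
  · -- w.1 ≠ 0, then w'.1 ≠ 0
    have hw'1 : w'.1 ≠ 0 := by
      intro h
      have hd : w.1 * w'.2 = 0 := by rw [hdet, h, mul_zero]
      rcases mul_eq_zero.mp hd with h1 | h1
      · exact hw1 h1
      · exact hw'ne (Prod.ext h h1)
    set u : ℤ × ℤ := (w'.1 * w.1, w'.1 * w.2) with hudef
    have hune : u ≠ 0 := by
      intro h
      have : u.1 = 0 := by rw [h]; rfl
      simp only [hudef] at this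
      rcases mul_eq_zero.mp this with h1 | h1
      · exact hw'1 h1
      · exact hw1 h1
    have h1 : u = w'.1 • w := rfl
    have h2 : u = w.1 • w' := by
      have e1 : (w.1 • w' : ℤ × ℤ) = (w.1 * w'.1, w.1 * w'.2) := rfl
      rw [hudef, e1]
      exact Prod.ext (mul_comm _ _) (by linear_combination -hdet)
    exact ((hQ u hune).unique ⟨hw'Q, w.1, h2⟩ ⟨hwQ, w'.1, h1⟩)

/-- The X-ray transform `I : H^s(𝕋²) → H^s(𝕋² × Q)` is an isometry for every `s ∈ ℝ`:
`‖I f‖²_{H^s(𝕋²×Q)} = |Î f(0,0)|² + Σ_{k≠0} Σ_{v∈Q} ⟨k⟩^{2s} |Î f(k,v)|²` equals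
`‖f‖²_{H^s(𝕋²)} = Σ_k ⟨k⟩^{2s} |f̂(k)|²`. -/
theorem torusXray_isometry (s : ℝ) (Q : Set (ℤ × ℤ)) (hQ0 : (0, 0) ∉ Q)
    (hQ : ∀ v : ℤ × ℤ, v ≠ 0 → ∃! w : ℤ × ℤ, w ∈ Q ∧ ∃ c : ℤ, v = c • w)
    (f : ℤ × ℤ → ℂ) :
    ENNReal.ofReal (‖xrayCoef f 0 (1, 0)‖^2) +
      (∑' k : {k : ℤ × ℤ // k ≠ 0}, ∑' v : Q,
        ENNReal.ofReal (sobWt s k.1 * ‖xrayCoef f k.1 v.1‖^2)) =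
      ∑' k : ℤ × ℤ, ENNReal.ofReal (sobWt s k * ‖f k‖^2) := by
  -- evaluate the k = 0 term
  have h00 : xrayCoef f 0 (1, 0) = f 0 := by simp [xrayCoef]
  have hwt0 : sobWt s 0 = 1 := by simp [sobWt]
  -- inner sums collapse to a single direction
  have hinner : ∀ k : {k : ℤ × ℤ // k ≠ 0},
      (∑' v : Q, ENNReal.ofReal (sobWt s k.1 * ‖xrayCoef f k.1 v.1‖^2))
        = ENNReal.ofReal (sobWt s k.1 * ‖f k.1‖^2) := by
    intro k
    obtain ⟨v0, ⟨hv0Q, hv0orth⟩, huniq⟩ := exists_unique_orth Q hQ0 hQ k.1 k.2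
    rw [tsum_eq_single (⟨v0, hv0Q⟩ : Q)]
    · rw [show xrayCoef f k.1 v0 = f k.1 from if_pos hv0orth]
    · rintro ⟨v, hvQ⟩ hv
      have hvorth : k.1.1 * v.1 + k.1.2 * v.2 ≠ 0 := by
        intro h
        exact hv (Subtype.ext (huniq v ⟨hvQ, h⟩))
      rw [show xrayCoef f k.1 v = 0 from if_neg hvorth]
      simp
  -- split the right-hand sum at k = 0
  rw [ENNReal.tsum_eq_add_tsum_ite (0 : ℤ × ℤ), h00, hwt0, one_mul]
  congr 1
  refine (tsum_congr hinner).trans ?_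
  refine (tsum_subtype ({k : ℤ × ℤ | k ≠ 0})
    (fun k => ENNReal.ofReal (sobWt s k * ‖f k‖^2))).trans ?_
  refine tsum_congr fun k => ?_
  by_cases h : k = 0 <;> simp [Set.indicator, h]
end

section
/- For any s ∈ ℝ, the adjoint I* : H^s(𝕋² × Q) → H^s(𝕋²) of the X-ray transform I : H^s(𝕋²) → H^s(𝕋² × Q), given by (I*g)^(k) = ĝ(k, k̂^⊥), satisfies I* I = Id on H^s(𝕋²); hence I is unitary onto its range. -/
/-- The adjoint `I*` of the X-ray transform, given on Fourier coefficients by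
`(I*g)^(k) = ĝ(k, k̂^⊥)`, satisfies `I* I = Id` on `H^s(𝕋²)` (on the level of Fourier
coefficients this is independent of `s ∈ ℝ`); hence `I` is unitary onto its range.
Here `Q` is the set of primitive directions, `hat w ∈ Q` denotes the primitive
direction parallel to `w` (arbitrary for `w = 0`), and `k^⊥ = (−k₂, k₁)`. -/
theorem torusXray_adjoint_normal_identity (s : ℝ)
    (Q : Set (ℤ × ℤ)) (hQ0 : (0, 0) ∉ Q)
    (hQ : ∀ v : ℤ × ℤ, v ≠ 0 → ∃! w : ℤ × ℤ, w ∈ Q ∧ ∃ c : ℤ, v = c • w)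
    (hat : ℤ × ℤ → ℤ × ℤ)
    (hhatQ : ∀ w : ℤ × ℤ, hat w ∈ Q)
    (hhat : ∀ w : ℤ × ℤ, w ≠ 0 → ∃ c : ℤ, w = c • hat w)
    (f : ℤ × ℤ → ℂ) (k : ℤ × ℤ) :
    xrayCoef f k (hat (-k.2, k.1)) = f k := by
  unfold xrayCoef
  rw [if_pos]
  by_cases hk : k = 0
  · subst hk; simp
  · have hperp : ((-k.2, k.1) : ℤ × ℤ) ≠ 0 := by
      intro h
      apply hk
      have h1 := congrArg Prod.fst h
      have h2 := congrArg Prod.snd h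
      simp at h1 h2
      exact Prod.ext h2 h1
    obtain ⟨c, hc⟩ := hhat _ hperp
    have hc1 := congrArg Prod.fst hc
    have hc2 := congrArg Prod.snd hc
    simp [Prod.smul_def] at hc1 hc2
    have hcnz : c ≠ 0 := by
      rintro rfl
      simp at hc1 hc2
      exact hperp (Prod.ext (by simp [hc1]) (by simp [hc2]))
    have key : c * (k.1 * (hat (-k.2, k.1)).1 + k.2 * (hat (-k.2, k.1)).2) = 0 := by
      have : k.1 * (c * (hat (-k.2, k.1)).1) + k.2 * (c * (hat (-k.2, k.1)).2) = 0 := by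
        rw [← hc1, ← hc2]; ring
      linarith [this]
    exact (mul_eq_zero.mp key).resolve_left hcnz
end

section
/- Fix r ∈ ℝ, s ≥ r, α > 0, and g ∈ H^r(𝕋² × Q). The Tikhonov functional f ↦ ‖I f − g‖²_{H^r(𝕋² × Q)} + α‖f‖²_{H^s(𝕋²)} over f ∈ H^r(𝕋²) has the unique minimizer f with Fourier coefficients f̂(k) = (1 + α⟨k⟩^{2(s−r)})^{-1} ĝ(k, k̂^⊥); moreover this minimizer belongs to H^{2s−r}(𝕋²). -/
open scoped ENNReal

/-- Squared `H^r(𝕋²)` norm on the Fourier side. -/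
noncomputable def sobNormSq (r : ℝ) (f : ℤ × ℤ → ℂ) : ℝ≥0∞ :=
  ∑' k : ℤ × ℤ, ENNReal.ofReal (sobWt r k * ‖f k‖^2)

private lemma quad_ident (a c : ℝ) (ha : 0 < a) (hc : 0 < c) (b z : ℂ) :
    a * ‖z - b‖^2 + c * ‖z‖^2 =
      (a * ‖((a/(a+c) : ℝ) : ℂ) * b - b‖^2 + c * ‖((a/(a+c) : ℝ) : ℂ) * b‖^2)
        + (a+c) * ‖z - ((a/(a+c) : ℝ) : ℂ) * b‖^2 := by
  have hac : a + c ≠ 0 := by positivity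
  simp only [Complex.sq_norm, Complex.normSq_apply, Complex.sub_re,
    Complex.sub_im, Complex.mul_re, Complex.mul_im, Complex.ofReal_re, Complex.ofReal_im]
  field_simp
  ring

private lemma tsum_split_zero (F : ℤ × ℤ → ℝ≥0∞) :
    ∑' k : ℤ × ℤ, F k = F 0 + ∑' k : {k : ℤ × ℤ // k ≠ 0}, F k.1 := by
  rw [ENNReal.tsum_eq_add_tsum_ite (0 : ℤ × ℤ)]
  congr 1
  have h1 : ∑' k : {k : ℤ × ℤ // k ≠ 0}, F k.1
      = ∑' k : ℤ × ℤ, Set.indicator {k : ℤ × ℤ | k ≠ 0} F k := tsum_subtype _ F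
  rw [h1]
  refine tsum_congr fun k => ?_
  by_cases h : k = 0 <;> simp [Set.indicator_apply, h]

/-- Tikhonov regularization: for `r ∈ ℝ`, `s ≥ r`, `α > 0` and data
`g ∈ H^r(𝕋² × Q)`, the Tikhonov functional
`J(f) = ‖I f − g‖²_{H^r(𝕋²×Q)} + α ‖f‖²_{H^s(𝕋²)}` over `f ∈ H^r(𝕋²)` has the
unique minimizer with Fourier coefficients
`f̂(k) = (1 + α⟨k⟩^{2(s−r)})⁻¹ ĝ(k, k̂^⊥)`, and this minimizer lies in `H^{2s−r}(𝕋²)`. -/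
theorem tikhonov_minimizer (r s α : ℝ) (hrs : r ≤ s) (hα : 0 < α)
    (Q : Set (ℤ × ℤ)) (hQ0 : (0, 0) ∉ Q)
    (hQ : ∀ v : ℤ × ℤ, v ≠ 0 → ∃! w : ℤ × ℤ, w ∈ Q ∧ ∃ c : ℤ, v = c • w)
    (hat : ℤ × ℤ → ℤ × ℤ)
    (hhatQ : ∀ w : ℤ × ℤ, hat w ∈ Q)
    (hhat : ∀ w : ℤ × ℤ, w ≠ 0 → ∃ c : ℤ, w = c • hat w)
    (g : ℤ × ℤ → ℤ × ℤ → ℂ)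
    (hg0 : ∀ v ∈ Q, ∀ w ∈ Q, g 0 v = g 0 w)
    (hgH : ENNReal.ofReal (‖g 0 (hat 0)‖^2) +
        (∑' k : {k : ℤ × ℤ // k ≠ 0}, ∑' v : Q,
          ENNReal.ofReal (sobWt r k.1 * ‖g k.1 v.1‖^2)) < ⊤) :
    let J : (ℤ × ℤ → ℂ) → ℝ≥0∞ := fun f =>
      ENNReal.ofReal (‖f 0 - g 0 (hat 0)‖^2) +
        (∑' k : {k : ℤ × ℤ // k ≠ 0}, ∑' v : Q,
          ENNReal.ofReal (sobWt r k.1 * ‖xrayCoef f k.1 v.1 - g k.1 v.1‖^2)) +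
        ENNReal.ofReal α * sobNormSq s f
    let fmin : ℤ × ℤ → ℂ := fun k =>
      ((1 + α * sobWt (s - r) k : ℝ) : ℂ)⁻¹ * g k (hat (-k.2, k.1))
    (∀ f : ℤ × ℤ → ℂ, J fmin ≤ J f) ∧
    (∀ f : ℤ × ℤ → ℂ, sobNormSq r f < ⊤ → J f ≤ J fmin → f = fmin) ∧
    sobNormSq (2 * s - r) fmin < ⊤ := by
  intro J fmin
  classical
  -- geometry of Q
  have hperp_ne : ∀ k : ℤ × ℤ, k ≠ 0 → ((-k.2, k.1) : ℤ × ℤ) ≠ 0 := by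
    intro k hk h
    simp only [Prod.ext_iff, Prod.fst_zero, Prod.snd_zero, neg_eq_zero] at h
    exact hk (by simp [Prod.ext_iff, h.1, h.2])
  have hvne : ∀ v ∈ Q, v ≠ (0 : ℤ × ℤ) := by
    intro v hv h
    subst h
    exact hQ0 hv
  have hdot : ∀ k : ℤ × ℤ, k ≠ 0 →
      k.1 * (hat (-k.2, k.1)).1 + k.2 * (hat (-k.2, k.1)).2 = 0 := by
    intro k hk
    obtain ⟨c, hc⟩ := hhat _ (hperp_ne k hk)
    rw [Prod.ext_iff] at hc
    simp only [Prod.smul_fst, Prod.smul_snd, smul_eq_mul] at hc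
    obtain ⟨h1, h2⟩ := hc
    linear_combination (hat (-k.2, k.1)).1 * h2 - (hat (-k.2, k.1)).2 * h1
  have huniq : ∀ k : ℤ × ℤ, k ≠ 0 → ∀ v ∈ Q,
      k.1 * v.1 + k.2 * v.2 = 0 → v = hat (-k.2, k.1) := by
    intro k hk v hvQ hdotv
    obtain ⟨c, hc⟩ := hhat _ (hperp_ne k hk)
    have hvne0 : v ≠ 0 := hvne v hvQ
    have hkc : k.1 ≠ 0 ∨ k.2 ≠ 0 := by
      by_contra h
      push_neg at h
      exact hk (by rw [Prod.ext_iff]; simpa using h)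
    rcases hkc with hk1 | hk2
    · have hm0 : (k.1 • v : ℤ × ℤ) ≠ 0 := by
        intro h
        rw [Prod.ext_iff] at h
        simp only [Prod.smul_fst, Prod.smul_snd, smul_eq_mul, Prod.fst_zero, Prod.snd_zero,
          mul_eq_zero] at h
        apply hvne0
        rw [Prod.ext_iff]
        simpa using ⟨(h.1.resolve_left hk1 : _), (h.2.resolve_left hk1 : _)⟩
      have heq : (k.1 • v : ℤ × ℤ) = (v.2 * c) • hat (-k.2, k.1) := by
        have h0 : (k.1 • v : ℤ × ℤ) = v.2 • ((-k.2, k.1) : ℤ × ℤ) := by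
          rw [Prod.ext_iff]
          constructor
          · simp only [Prod.smul_fst, smul_eq_mul]
            linarith [hdotv]
          · simp only [Prod.smul_snd, smul_eq_mul]
            ring
        rw [h0]
        conv_lhs => rw [hc]
        rw [smul_smul]
      obtain ⟨w, _, hwu⟩ := hQ (k.1 • v) hm0
      have h1 := hwu v ⟨hvQ, ⟨k.1, rfl⟩⟩
      have h2 := hwu (hat (-k.2, k.1)) ⟨hhatQ _, ⟨v.2 * c, heq⟩⟩
      rw [h1, h2]
    · have hm0 : ((-k.2) • v : ℤ × ℤ) ≠ 0 := by
        intro h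
        rw [Prod.ext_iff] at h
        simp only [Prod.smul_fst, Prod.smul_snd, smul_eq_mul, Prod.fst_zero, Prod.snd_zero,
          mul_eq_zero, neg_eq_zero] at h
        apply hvne0
        rw [Prod.ext_iff]
        simpa using ⟨(h.1.resolve_left hk2 : _), (h.2.resolve_left hk2 : _)⟩
      have heq : ((-k.2) • v : ℤ × ℤ) = (v.1 * c) • hat (-k.2, k.1) := by
        have h0 : ((-k.2) • v : ℤ × ℤ) = v.1 • ((-k.2, k.1) : ℤ × ℤ) := by
          rw [Prod.ext_iff]
          constructor
          · simp only [Prod.smul_fst, smul_eq_mul]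
            ring
          · simp only [Prod.smul_snd, smul_eq_mul]
            linarith [hdotv]
        rw [h0]
        conv_lhs => rw [hc]
        rw [smul_smul]
      obtain ⟨w, _, hwu⟩ := hQ ((-k.2) • v) hm0
      have h1 := hwu v ⟨hvQ, ⟨-k.2, rfl⟩⟩
      have h2 := hwu (hat (-k.2, k.1)) ⟨hhatQ _, ⟨v.1 * c, heq⟩⟩
      rw [h1, h2]
  -- weights
  have hbase : ∀ k : ℤ × ℤ, (0:ℝ) < 1 + (k.1:ℝ)^2 + (k.2:ℝ)^2 := fun k => by positivity
  have hw_pos : ∀ (t : ℝ) (k : ℤ × ℤ), 0 < sobWt t k := fun t k =>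
    Real.rpow_pos_of_pos (hbase k) t
  have hw_mul : ∀ (a b : ℝ) (k : ℤ × ℤ), sobWt a k * sobWt b k = sobWt (a+b) k := by
    intro a b k
    unfold sobWt
    rw [← Real.rpow_add (hbase k)]
  have hx1 : ∀ k : ℤ × ℤ, 1 ≤ 1 + α * sobWt (s-r) k := by
    intro k
    nlinarith [hw_pos (s-r) k, hα]
  have hx_pos : ∀ k : ℤ × ℤ, (0:ℝ) < 1 + α * sobWt (s-r) k := fun k =>
    lt_of_lt_of_le one_pos (hx1 k)
  have hJdef : ∀ f : ℤ × ℤ → ℂ, J f =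
      ENNReal.ofReal (‖f 0 - g 0 (hat 0)‖^2) +
        (∑' k : {k : ℤ × ℤ // k ≠ 0}, ∑' v : Q,
          ENNReal.ofReal (sobWt r k.1 * ‖xrayCoef f k.1 v.1 - g k.1 v.1‖^2)) +
        ENNReal.ofReal α * sobNormSq s f := fun f => rfl
  have hfmindef : ∀ k : ℤ × ℤ, fmin k
      = ((1 + α * sobWt (s - r) k : ℝ) : ℂ)⁻¹ * g k (hat (-k.2, k.1)) := fun k => rfl
  -- norms of fmin
  have hnorm_fmin : ∀ k : ℤ × ℤ,
      ‖fmin k‖ = (1 + α * sobWt (s-r) k)⁻¹ * ‖g k (hat (-k.2, k.1))‖ := by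
    intro k
    rw [hfmindef k, norm_mul, norm_inv, Complex.norm_real, Real.norm_eq_abs,
      abs_of_pos (hx_pos k)]
  have hnorm_fmin_sub : ∀ k : ℤ × ℤ, ‖fmin k - g k (hat (-k.2, k.1))‖
      = (1 - (1 + α * sobWt (s-r) k)⁻¹) * ‖g k (hat (-k.2, k.1))‖ := by
    intro k
    have hrw : fmin k - g k (hat (-k.2, k.1))
        = (((1 + α * sobWt (s-r) k)⁻¹ - 1 : ℝ) : ℂ) * g k (hat (-k.2, k.1)) := by
      rw [hfmindef k]
      push_cast
      ring
    rw [hrw, norm_mul, Complex.norm_real, Real.norm_eq_abs, abs_of_nonpos (by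
      have := inv_le_one_of_one_le₀ (hx1 k); linarith), neg_sub]
  -- scalar bounds
  have hbound0 : ∀ k : ℤ × ℤ, (1 - (1 + α * sobWt (s-r) k)⁻¹)^2 ≤ 1 := by
    intro k
    have h1 : 0 < (1 + α * sobWt (s-r) k)⁻¹ := inv_pos.mpr (hx_pos k)
    have h2 : (1 + α * sobWt (s-r) k)⁻¹ ≤ 1 := inv_le_one_of_one_le₀ (hx1 k)
    nlinarith
  have hbound1 : ∀ k : ℤ × ℤ,
      α * sobWt s k * ((1 + α * sobWt (s-r) k)⁻¹)^2 ≤ sobWt r k := by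
    intro k
    have hx := hx_pos k
    have h1 : α * sobWt s k ≤ sobWt r k * (1 + α * sobWt (s-r) k)^2 := by
      have hxx : α * sobWt (s-r) k ≤ (1 + α * sobWt (s-r) k)^2 := by
        nlinarith [hw_pos (s-r) k, hα]
      have h2 := mul_le_mul_of_nonneg_left hxx (hw_pos r k).le
      calc α * sobWt s k = sobWt r k * (α * sobWt (s-r) k) := by
            rw [show sobWt r k * (α * sobWt (s-r) k)
                = α * (sobWt r k * sobWt (s-r) k) by ring, hw_mul r (s-r) k,
              show r + (s-r) = s by ring]
        _ ≤ _ := h2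
    calc α * sobWt s k * ((1 + α * sobWt (s-r) k)⁻¹)^2
        ≤ sobWt r k * (1 + α * sobWt (s-r) k)^2 * ((1 + α * sobWt (s-r) k)⁻¹)^2 :=
          mul_le_mul_of_nonneg_right h1 (by positivity)
      _ = sobWt r k := by field_simp
  have hbound2 : ∀ k : ℤ × ℤ,
      sobWt (2*s-r) k * ((1 + α * sobWt (s-r) k)⁻¹)^2 ≤ α⁻¹^2 * sobWt r k := by
    intro k
    have hx := hx_pos k
    have hww : sobWt r k * sobWt (s-r) k * sobWt (s-r) k = sobWt (2*s-r) k := by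
      rw [hw_mul r (s-r) k, hw_mul (r+(s-r)) (s-r) k]
      congr 1
      ring
    have h1 : sobWt (2*s-r) k ≤ α⁻¹^2 * sobWt r k * (1 + α * sobWt (s-r) k)^2 := by
      have hxx : (α * sobWt (s-r) k)^2 ≤ (1 + α * sobWt (s-r) k)^2 := by
        nlinarith [hw_pos (s-r) k, hα]
      calc sobWt (2*s-r) k
          = (α⁻¹*α)^2 * (sobWt r k * (sobWt (s-r) k * sobWt (s-r) k)) := by
            rw [inv_mul_cancel₀ hα.ne', ← hww]
            ring
        _ = α⁻¹^2 * sobWt r k * (α * sobWt (s-r) k)^2 := by ring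
        _ ≤ α⁻¹^2 * sobWt r k * (1 + α * sobWt (s-r) k)^2 := by
            refine mul_le_mul_of_nonneg_left hxx ?_
            exact mul_nonneg (by positivity) (hw_pos r k).le
    calc sobWt (2*s-r) k * ((1 + α * sobWt (s-r) k)⁻¹)^2
        ≤ α⁻¹^2 * sobWt r k * (1 + α * sobWt (s-r) k)^2 * ((1 + α * sobWt (s-r) k)⁻¹)^2 :=
          mul_le_mul_of_nonneg_right h1 (by positivity)
      _ = α⁻¹^2 * sobWt r k := by
          field_simp
  -- the pointwise decomposition of J
  set P : (ℤ × ℤ → ℂ) → (ℤ × ℤ) → ℝ≥0∞ := fun f k =>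
    ENNReal.ofReal (sobWt r k * ‖f k - g k (hat (-k.2, k.1))‖^2
      + α * sobWt s k * ‖f k‖^2) with hP
  set CC : ℝ≥0∞ := ∑' kk : {k : ℤ × ℤ // k ≠ 0}, ∑' v : Q,
      (if (v : ℤ × ℤ) = hat (-kk.1.2, kk.1.1) then 0
       else ENNReal.ofReal (sobWt r kk.1 * ‖g kk.1 v.1‖^2)) with hCC
  have hinner : ∀ (f : ℤ × ℤ → ℂ) (k : ℤ × ℤ), k ≠ 0 →
      (∑' v : Q, ENNReal.ofReal (sobWt r k * ‖xrayCoef f k v.1 - g k v.1‖^2))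
      = ENNReal.ofReal (sobWt r k * ‖f k - g k (hat (-k.2, k.1))‖^2)
        + ∑' v : Q, (if (v : ℤ × ℤ) = hat (-k.2, k.1) then 0
            else ENNReal.ofReal (sobWt r k * ‖g k v.1‖^2)) := by
    intro f k hk
    rw [ENNReal.tsum_eq_add_tsum_ite (⟨hat (-k.2, k.1), hhatQ _⟩ : Q)]
    congr 1
    · show ENNReal.ofReal
        (sobWt r k * ‖xrayCoef f k (hat (-k.2, k.1)) - g k (hat (-k.2, k.1))‖^2) = _
      have hx : xrayCoef f k (hat (-k.2, k.1)) = f k := by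
        unfold xrayCoef
        exact if_pos (hdot k hk)
      rw [hx]
    · refine tsum_congr fun v => ?_
      by_cases hv : (v : ℤ × ℤ) = hat (-k.2, k.1)
      · rw [if_pos (Subtype.ext hv), if_pos hv]
      · rw [if_neg (fun h => hv (congrArg Subtype.val h)), if_neg hv]
        have hx0 : xrayCoef f k v.1 = 0 := by
          unfold xrayCoef
          rw [if_neg]
          intro hdv
          exact hv (huniq k hk v.1 v.2 hdv)
        rw [hx0, zero_sub, norm_neg]
  have hJP : ∀ f : ℤ × ℤ → ℂ, J f = (∑' k : ℤ × ℤ, P f k) + CC := by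
    intro f
    have hstep1 : (∑' kk : {k : ℤ × ℤ // k ≠ 0}, ∑' v : Q,
          ENNReal.ofReal (sobWt r kk.1 * ‖xrayCoef f kk.1 v.1 - g kk.1 v.1‖^2))
        = (∑' kk : {k : ℤ × ℤ // k ≠ 0},
            ENNReal.ofReal (sobWt r kk.1 * ‖f kk.1 - g kk.1 (hat (-kk.1.2, kk.1.1))‖^2))
          + CC := by
      rw [hCC, ← ENNReal.tsum_add]
      exact tsum_congr fun kk => hinner f kk.1 kk.2
    have hstep2 : ENNReal.ofReal (‖f 0 - g 0 (hat 0)‖^2)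
        + (∑' kk : {k : ℤ × ℤ // k ≠ 0},
            ENNReal.ofReal (sobWt r kk.1 * ‖f kk.1 - g kk.1 (hat (-kk.1.2, kk.1.1))‖^2))
        = ∑' k : ℤ × ℤ, ENNReal.ofReal (sobWt r k * ‖f k - g k (hat (-k.2, k.1))‖^2) := by
      rw [tsum_split_zero (fun k => ENNReal.ofReal
        (sobWt r k * ‖f k - g k (hat (-k.2, k.1))‖^2))]
      congr 1
      have h00 : ((-(0:ℤ×ℤ).2, (0:ℤ×ℤ).1) : ℤ × ℤ) = (0 : ℤ × ℤ) := by
        simp [Prod.ext_iff]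
      have h0 : sobWt r (0 : ℤ × ℤ) = 1 := by
        simp [sobWt]
      rw [h00, h0, one_mul]
    have hstep3 : ENNReal.ofReal α * sobNormSq s f
        = ∑' k : ℤ × ℤ, ENNReal.ofReal (α * sobWt s k * ‖f k‖^2) := by
      unfold sobNormSq
      rw [← ENNReal.tsum_mul_left]
      refine tsum_congr fun k => ?_
      rw [← ENNReal.ofReal_mul hα.le]
      congr 1
      ring
    have hstep4 : (∑' k : ℤ × ℤ, P f k)
        = (∑' k : ℤ × ℤ, ENNReal.ofReal (sobWt r k * ‖f k - g k (hat (-k.2, k.1))‖^2))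
          + ∑' k : ℤ × ℤ, ENNReal.ofReal (α * sobWt s k * ‖f k‖^2) := by
      rw [← ENNReal.tsum_add]
      refine tsum_congr fun k => ?_
      rw [hP]
      exact ENNReal.ofReal_add (mul_nonneg (hw_pos r k).le (by positivity))
        (mul_nonneg (mul_nonneg hα.le (hw_pos s k).le) (by positivity))
    rw [hJdef f, hstep1, hstep3, hstep4, ← hstep2]
    ring
  -- the exact fmin formula
  have hmeq : ∀ k : ℤ × ℤ, fmin k
      = ((sobWt r k / (sobWt r k + α * sobWt s k) : ℝ) : ℂ) * g k (hat (-k.2, k.1)) := by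
    intro k
    rw [hfmindef k]
    congr 1
    rw [← Complex.ofReal_inv]
    congr 1
    have hws : sobWt r k * sobWt (s - r) k = sobWt s k := by
      rw [hw_mul r (s-r) k]
      congr 1
      ring
    have hden : sobWt r k + α * sobWt s k = sobWt r k * (1 + α * sobWt (s-r) k) := by
      rw [mul_add, mul_one, ← hws]
      ring
    have ha := (hw_pos r k).ne'
    have hx := (hx_pos k).ne'
    rw [hden]
    field_simp
  have hpoint : ∀ (f : ℤ × ℤ → ℂ) (k : ℤ × ℤ), P f k = P fmin k
      + ENNReal.ofReal ((sobWt r k + α * sobWt s k) * ‖f k - fmin k‖^2) := by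
    intro f k
    have hq := quad_ident (sobWt r k) (α * sobWt s k) (hw_pos r k)
      (mul_pos hα (hw_pos s k)) (g k (hat (-k.2, k.1))) (f k)
    simp only [hP]
    rw [hmeq k, hq, ENNReal.ofReal_add]
    · exact add_nonneg (mul_nonneg (hw_pos r k).le (by positivity))
        (mul_nonneg (mul_nonneg hα.le (hw_pos s k).le) (by positivity))
    · refine mul_nonneg ?_ (by positivity)
      have h1 := hw_pos r k
      have h2 := mul_pos hα (hw_pos s k)
      linarith
  have hsplitJ : ∀ f : ℤ × ℤ → ℂ, J f = J fmin
      + ∑' k : ℤ × ℤ, ENNReal.ofReal ((sobWt r k + α * sobWt s k) * ‖f k - fmin k‖^2) := by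
    intro f
    rw [hJP f, hJP fmin]
    have h1 : (∑' k : ℤ × ℤ, P f k) = (∑' k : ℤ × ℤ, P fmin k)
        + ∑' k : ℤ × ℤ, ENNReal.ofReal ((sobWt r k + α * sobWt s k) * ‖f k - fmin k‖^2) := by
      rw [← ENNReal.tsum_add]
      exact tsum_congr fun k => hpoint f k
    rw [h1]
    ring
  -- finiteness
  have hSG : (∑' k : ℤ × ℤ, ENNReal.ofReal (sobWt r k * ‖g k (hat (-k.2, k.1))‖^2)) < ⊤ := by
    rw [tsum_split_zero]
    refine ENNReal.add_lt_top.mpr ⟨ENNReal.ofReal_lt_top, ?_⟩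
    refine lt_of_le_of_lt (ENNReal.tsum_le_tsum fun kk => ?_)
      (lt_of_le_of_lt le_add_self hgH)
    exact ENNReal.le_tsum (⟨hat (-kk.1.2, kk.1.1), hhatQ _⟩ : Q)
  have hCCfin : CC < ⊤ := by
    rw [hCC]
    refine lt_of_le_of_lt (ENNReal.tsum_le_tsum fun kk => ENNReal.tsum_le_tsum fun v => ?_)
      (lt_of_le_of_lt le_add_self hgH)
    split
    · exact zero_le
    · exact le_rfl
  have hMfin : (∑' k : ℤ × ℤ, P fmin k) < ⊤ := by
    have hle2 : ∀ k : ℤ × ℤ, P fmin k ≤ ENNReal.ofReal (sobWt r k * ‖g k (hat (-k.2, k.1))‖^2)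
          + ENNReal.ofReal (sobWt r k * ‖g k (hat (-k.2, k.1))‖^2) := by
      intro k
      simp only [hP]
      rw [← ENNReal.ofReal_add (mul_nonneg (hw_pos r k).le (by positivity))
        (mul_nonneg (hw_pos r k).le (by positivity))]
      apply ENNReal.ofReal_le_ofReal
      rw [hnorm_fmin k, hnorm_fmin_sub k]
      have h0 := hbound0 k
      have h1 := hbound1 k
      have hb := sq_nonneg ‖g k (hat (-k.2, k.1))‖
      have hr := (hw_pos r k).le
      nlinarith [mul_le_mul_of_nonneg_right h1 hb,
        mul_le_mul_of_nonneg_right (mul_le_mul_of_nonneg_left h0 hr) hb]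
    refine lt_of_le_of_lt (ENNReal.tsum_le_tsum hle2) ?_
    rw [ENNReal.tsum_add]
    exact ENNReal.add_lt_top.mpr ⟨hSG, hSG⟩
  have hJfin : J fmin ≠ ⊤ := by
    rw [hJP fmin]
    exact (ENNReal.add_lt_top.mpr ⟨hMfin, hCCfin⟩).ne
  refine ⟨?_, ?_, ?_⟩
  · intro f
    rw [hsplitJ f]
    exact le_self_add
  · intro f _ hle
    rw [hsplitJ f] at hle
    have hD : (∑' k : ℤ × ℤ,
        ENNReal.ofReal ((sobWt r k + α * sobWt s k) * ‖f k - fmin k‖^2)) = 0 := by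
      have h1 : J fmin + (∑' k : ℤ × ℤ,
          ENNReal.ofReal ((sobWt r k + α * sobWt s k) * ‖f k - fmin k‖^2)) ≤ J fmin + 0 := by
        simpa using hle
      have h2 := (ENNReal.add_le_add_iff_left hJfin).mp h1
      exact le_antisymm h2 zero_le
    funext k
    have hk0 := ENNReal.tsum_eq_zero.mp hD k
    rw [ENNReal.ofReal_eq_zero] at hk0
    have hpos : (0:ℝ) < sobWt r k + α * sobWt s k := by
      have h1 := hw_pos r k
      have h2 := mul_pos hα (hw_pos s k)
      linarith
    have h3 : ‖f k - fmin k‖^2 ≤ 0 := by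
      nlinarith [sq_nonneg ‖f k - fmin k‖]
    have h4 : ‖f k - fmin k‖^2 = 0 := le_antisymm h3 (sq_nonneg _)
    have h5 : ‖f k - fmin k‖ = 0 := pow_eq_zero_iff two_ne_zero |>.mp h4
    exact sub_eq_zero.mp (norm_eq_zero.mp h5)
  · have hb3 : ∀ k : ℤ × ℤ, sobWt (2*s - r) k * ‖fmin k‖^2
        ≤ α⁻¹^2 * (sobWt r k * ‖g k (hat (-k.2, k.1))‖^2) := by
      intro k
      rw [hnorm_fmin k]
      have h2 := hbound2 k
      have hb := sq_nonneg ‖g k (hat (-k.2, k.1))‖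
      nlinarith [mul_le_mul_of_nonneg_right h2 hb]
    unfold sobNormSq
    refine lt_of_le_of_lt (ENNReal.tsum_le_tsum fun k =>
      ENNReal.ofReal_le_ofReal (hb3 k)) ?_
    have hrw : (∑' k : ℤ × ℤ,
        ENNReal.ofReal (α⁻¹^2 * (sobWt r k * ‖g k (hat (-k.2, k.1))‖^2)))
        = ENNReal.ofReal (α⁻¹^2)
          * ∑' k : ℤ × ℤ, ENNReal.ofReal (sobWt r k * ‖g k (hat (-k.2, k.1))‖^2) := by
      rw [← ENNReal.tsum_mul_left]
      exact tsum_congr fun k => ENNReal.ofReal_mul (by positivity)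
    rw [hrw]
    exact ENNReal.mul_lt_top ENNReal.ofReal_lt_top hSG
end

section
/- Let s > 0, 0 < δ < 2s, and 0 < α ≤ 2s/δ − 1. Then for every f ∈ H^{r+δ}(𝕋²), ‖(P^s_α − Id) f‖_{H^r(𝕋²)} ≤ α^{δ/2s} C(δ/2s) ‖f‖_{H^{r+δ}(𝕋²)}, where C(x) = x(x^{-1} − 1)^{1−x}. -/
open scoped ENNReal

lemma key_ineq {x u : ℝ} (hx0 : 0 < x) (hx1 : x < 1) (hu : 0 ≤ u) :
    u ^ (1 - x) ≤ x * (x⁻¹ - 1) ^ (1 - x) * (1 + u) := by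
  have h1x : 0 < 1 - x := by linarith
  have hlam : 0 < x / (1 - x) := div_pos hx0 h1x
  have hgm := Real.geom_mean_le_arith_mean2_weighted h1x.le hx0.le
      (mul_nonneg hlam.le hu) zero_le_one (by ring)
  rw [Real.one_rpow, mul_one, mul_one] at hgm
  -- hgm : (x/(1-x) * u) ^ (1-x) ≤ (1-x) * (x/(1-x) * u) + x
  have hrw : (1 - x) * (x / (1 - x) * u) + x = x * (1 + u) := by
    field_simp; ring
  rw [hrw, Real.mul_rpow hlam.le hu] at hgm
  have hinv : (x⁻¹ - 1) = (x / (1 - x))⁻¹ := by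
    field_simp
  calc u ^ (1 - x) = (x / (1 - x)) ^ (1 - x) * u ^ (1 - x) * (x / (1 - x))⁻¹ ^ (1 - x) := by
        rw [Real.inv_rpow hlam.le, mul_comm ((x / (1 - x)) ^ (1 - x)) (u ^ (1 - x)),
          mul_assoc, mul_inv_cancel₀ (by positivity), mul_one]
    _ ≤ x * (1 + u) * (x / (1 - x))⁻¹ ^ (1 - x) := by
        apply mul_le_mul_of_nonneg_right hgm
        positivity
    _ = x * (x⁻¹ - 1) ^ (1 - x) * (1 + u) := by rw [hinv]; ring

lemma pointwise_bound (r s δ α : ℝ)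
    (hs : 0 < s) (hδ : 0 < δ) (hδs : δ < 2 * s) (hα : 0 < α)
    (k : ℤ × ℤ) (z : ℂ) :
    sobWt r k * ‖(((1 + α * sobWt s k : ℝ) : ℂ)⁻¹ - 1) * z‖^2 ≤
      ((α ^ (δ / (2 * s)) *
          ((δ / (2 * s)) * ((δ / (2 * s))⁻¹ - 1) ^ (1 - δ / (2 * s))))^2) *
        (sobWt (r + δ) k * ‖z‖^2) := by
  set x := δ / (2 * s) with hxdef
  have hx0 : 0 < x := by positivity
  have hx1 : x < 1 := by rw [hxdef, div_lt_one (by linarith)]; linarith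
  simp only [sobWt]
  set B := 1 + (k.1 : ℝ)^2 + (k.2 : ℝ)^2 with hBdef
  have hB0 : (0:ℝ) < B := by positivity
  set u := α * B ^ s with hudef
  have hu : 0 < u := by positivity
  have h1u : (0:ℝ) < 1 + u := by linarith
  set Cx := x * (x⁻¹ - 1) ^ (1 - x) with hCxdef
  have hxinv : 0 ≤ x⁻¹ - 1 := by
    have : 1 ≤ x⁻¹ := by
      rw [le_inv_comm₀ one_pos hx0]; simpa using hx1.le
    linarith
  have hCx0 : 0 ≤ Cx := mul_nonneg hx0.le (Real.rpow_nonneg hxinv _)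
  have hC0 : 0 ≤ α ^ x * Cx := mul_nonneg (Real.rpow_nonneg hα.le _) hCx0
  -- norm computation
  have hc : (((1 + u : ℝ) : ℂ))⁻¹ - 1 = (((1 + u)⁻¹ - 1 : ℝ) : ℂ) := by push_cast; ring
  have hnorm : ‖(((1 + u : ℝ) : ℂ))⁻¹ - 1‖ = u / (1 + u) := by
    rw [hc, Complex.norm_real]
    have h2 : (1 + u)⁻¹ - 1 = -(u / (1 + u)) := by field_simp; ring
    rw [h2, norm_neg, Real.norm_of_nonneg (by positivity)]
  rw [norm_mul, mul_pow, hnorm]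
  -- key fraction bound
  have hkey := key_ineq hx0 hx1 hu.le
  have hfrac : u / (1 + u) ≤ (α ^ x * Cx) * B ^ (δ / 2) := by
    have h1 : u / (1 + u) ≤ Cx * u ^ x := by
      rw [div_le_iff₀ h1u]
      have h2 : u ^ (1 - x) * u ^ x ≤ (Cx * (1 + u)) * u ^ x :=
        mul_le_mul_of_nonneg_right hkey (Real.rpow_nonneg hu.le _)
      rw [← Real.rpow_add hu] at h2
      simpa [mul_comm, mul_assoc, mul_left_comm] using h2
    have h3 : u ^ x = α ^ x * B ^ (δ / 2) := by
      rw [hudef, Real.mul_rpow hα.le (Real.rpow_nonneg hB0.le _),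
        ← Real.rpow_mul hB0.le]
      have hexp : s * x = δ / 2 := by rw [hxdef]; field_simp
      rw [hexp]
    calc u / (1 + u) ≤ Cx * u ^ x := h1
      _ = (α ^ x * Cx) * B ^ (δ / 2) := by rw [h3]; ring
  have hsq : (u / (1 + u))^2 ≤ (α ^ x * Cx)^2 * B ^ δ := by
    have := mul_self_le_mul_self (by positivity) hfrac
    calc (u / (1 + u))^2 = (u / (1+u)) * (u / (1+u)) := sq (u / (1+u)) ▸ by ring
      _ ≤ ((α ^ x * Cx) * B ^ (δ / 2)) * ((α ^ x * Cx) * B ^ (δ / 2)) := this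
      _ = (α ^ x * Cx)^2 * (B ^ (δ/2) * B ^ (δ/2)) := by ring
      _ = (α ^ x * Cx)^2 * B ^ δ := by rw [← Real.rpow_add hB0]; norm_num
  rw [Real.rpow_add hB0 r δ]
  calc B ^ r * ((u / (1 + u))^2 * ‖z‖^2)
      ≤ B ^ r * (((α ^ x * Cx)^2 * B ^ δ) * ‖z‖^2) := by
        have h4 : (u / (1 + u))^2 * ‖z‖^2 ≤ ((α ^ x * Cx)^2 * B ^ δ) * ‖z‖^2 :=
          mul_le_mul_of_nonneg_right hsq (sq_nonneg _)
        exact mul_le_mul_of_nonneg_left h4 (by positivity)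
    _ = (α ^ x * Cx)^2 * (B ^ r * B ^ δ * ‖z‖^2) := by ring

/-- Approximation error of the post-processing operator: for `s > 0`, `0 < δ < 2s`
and `0 < α ≤ 2s/δ − 1`, every `f ∈ H^{r+δ}(𝕋²)` satisfies
`‖(P^s_α − Id) f‖_{H^r(𝕋²)} ≤ α^{δ/2s} C(δ/2s) ‖f‖_{H^{r+δ}(𝕋²)}`, where
`C(x) = x (x⁻¹ − 1)^{1−x}` (so `C(δ/2s) = (δ/2s)(2s/δ − 1)^{1−δ/2s}`).
Stated with squared norms. -/
theorem post_processing_approximation_estimate (r s δ α : ℝ)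
    (hs : 0 < s) (hδ : 0 < δ) (hδs : δ < 2 * s)
    (hα : 0 < α) (hα' : α ≤ 2 * s / δ - 1)
    (f : ℤ × ℤ → ℂ)
    (hf : (∑' k : ℤ × ℤ, ENNReal.ofReal (sobWt (r + δ) k * ‖f k‖^2)) < ⊤) :
    (∑' k : ℤ × ℤ, ENNReal.ofReal (sobWt r k *
        ‖(((1 + α * sobWt s k : ℝ) : ℂ)⁻¹ - 1) * f k‖^2)) ≤
      ENNReal.ofReal ((α ^ (δ / (2 * s)) *
          ((δ / (2 * s)) * ((δ / (2 * s))⁻¹ - 1) ^ (1 - δ / (2 * s))))^2) *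
        ∑' k : ℤ × ℤ, ENNReal.ofReal (sobWt (r + δ) k * ‖f k‖^2) := by
  calc (∑' k : ℤ × ℤ, ENNReal.ofReal (sobWt r k *
        ‖(((1 + α * sobWt s k : ℝ) : ℂ)⁻¹ - 1) * f k‖^2))
      ≤ ∑' k : ℤ × ℤ, ENNReal.ofReal ((α ^ (δ / (2 * s)) *
          ((δ / (2 * s)) * ((δ / (2 * s))⁻¹ - 1) ^ (1 - δ / (2 * s))))^2 *
          (sobWt (r + δ) k * ‖f k‖^2)) :=
        ENNReal.tsum_le_tsum fun k => ENNReal.ofReal_le_ofReal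
          (pointwise_bound r s δ α hs hδ hδs hα k (f k))
    _ = ENNReal.ofReal ((α ^ (δ / (2 * s)) *
          ((δ / (2 * s)) * ((δ / (2 * s))⁻¹ - 1) ^ (1 - δ / (2 * s))))^2) *
        ∑' k : ℤ × ℤ, ENNReal.ofReal (sobWt (r + δ) k * ‖f k‖^2) := by
        simp_rw [ENNReal.ofReal_mul (sq_nonneg _)]
        rw [ENNReal.tsum_mul_left]
end
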